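/- (Invariance of the language semantics.) For a timed automaton A (reset-point semantics) and any timed automorphism π mapping the configuration c = (p, μ, now) to a configuration with nonnegative components: L(A, π(c)) = π(L(A, c)), where L(A, c) is the set of timed words over which A has an accepting run starting from c. -/

import Mathlib

/-- A timed automorphism: a monotone bijection `π : ℝ → ℝ` with `π (x+1) = π x + 1`. -/
def IsTimedAutomorphism (π : ℝ → ℝ) : Prop :=
  Function.Bijective π ∧ StrictMono π ∧ ∀ x : ℝ, π (x + 1) = π x + 1

/-- An `S`-timed automorphism: a timed automorphism fixing every point of `S`. -/
def IsSTimedAutomorphism (S : Set ℝ) (π : ℝ → ℝ) : Prop :=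
  IsTimedAutomorphism π ∧ ∀ t ∈ S, π t = t

/-- A timed word: a finite sequence of letters with nonnegative, nondecreasing timestamps. -/
def IsTimedWord {A : Type*} (w : List (A × ℝ)) : Prop :=
  (∀ p ∈ w, 0 ≤ p.2) ∧ (w.map Prod.snd).Chain' (· ≤ ·)

/-- Pointwise action of a real function on the timestamps of a timed word. -/
def mapTW {A : Type*} (π : ℝ → ℝ) (w : List (A × ℝ)) : List (A × ℝ) :=
  w.map fun p => (p.1, π p.2)

/-- Comparison operators appearing in clock constraints. -/
inductive CmpOp where
  | lt | le | eq | ge | gt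

def CmpOp.holds : CmpOp → ℝ → ℝ → Prop
  | .lt, a, b => a < b
  | .le, a, b => a ≤ b
  | .eq, a, b => a = b
  | .ge, a, b => a ≥ b
  | .gt, a, b => a > b

/-- Clock constraints: Boolean combinations of comparisons of clock values and of
differences of clock values with integer constants. -/
inductive ClockConstraint (X : Type*) where
  | tt : ClockConstraint X
  | ff : ClockConstraint X
  | diff : X → X → CmpOp → ℤ → ClockConstraint X
  | single : X → CmpOp → ℤ → ClockConstraint X
  | not : ClockConstraint X → ClockConstraint X
  | and : ClockConstraint X → ClockConstraint X → ClockConstraint X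
  | or : ClockConstraint X → ClockConstraint X → ClockConstraint X

/-- Satisfaction of a clock constraint by a clock valuation `ν : X → ℝ`. -/
def ClockConstraint.sat {X : Type*} (ν : X → ℝ) : ClockConstraint X → Prop
  | .tt => True
  | .ff => False
  | .diff x y c z => CmpOp.holds c (ν x - ν y) (z : ℝ)
  | .single x c z => CmpOp.holds c (ν x) (z : ℝ)
  | .not φ => ¬ ClockConstraint.sat ν φ
  | .and φ ψ => ClockConstraint.sat ν φ ∧ ClockConstraint.sat ν ψ
  | .or φ ψ => ClockConstraint.sat ν φ ∨ ClockConstraint.sat ν ψ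

/-- All integer constants of the constraint have absolute value at most `m`. -/
def ClockConstraint.constBounded {X : Type*} (m : ℕ) : ClockConstraint X → Prop
  | .tt => True
  | .ff => True
  | .diff _ _ _ z => z.natAbs ≤ m
  | .single _ _ z => z.natAbs ≤ m
  | .not φ => ClockConstraint.constBounded m φ
  | .and φ ψ => ClockConstraint.constBounded m φ ∧ ClockConstraint.constBounded m ψ
  | .or φ ψ => ClockConstraint.constBounded m φ ∧ ClockConstraint.constBounded m ψ

/-- A (nondeterministic) timed automaton over alphabet `A`, locations `Q`, clocks `X`.
A rule `(p, a, φ, Y, q)` reads letter `a` in location `p`, tests guard `φ`, resets the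
clocks in `Y` and moves to location `q`. -/
structure TimedAutomaton (A Q X : Type*) where
  init : Set Q
  final : Set Q
  rules : Set (Q × A × ClockConstraint X × Set X × Q)

/-- A configuration in the reset-point semantics: a location, a reset-point
assignment for the clocks, and the current timestamp. -/
abbrev TAConfig (Q X : Type*) := Q × (X → ℝ) × ℝ

/-- One transition of the reset-point semantics: at time `t ≥ now`, the guard of some
rule is satisfied by the valuation `x ↦ t - μ x`; clocks in the reset set get reset
point `t`, the others keep their reset points. -/
def TimedAutomaton.Step {A Q X : Type*} (Aut : TimedAutomaton A Q X)
    (c : TAConfig Q X) (e : A × ℝ) (c' : TAConfig Q X) : Prop :=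
  c'.2.2 = e.2 ∧ c.2.2 ≤ e.2 ∧
  ∃ φ Y, (c.1, e.1, φ, Y, c'.1) ∈ Aut.rules ∧
    ClockConstraint.sat (fun x => e.2 - c.2.1 x) φ ∧
    (∀ x ∈ Y, c'.2.1 x = e.2) ∧ (∀ x ∉ Y, c'.2.1 x = c.2.1 x)

/-- Runs of a timed automaton over a timed word. -/
inductive TimedAutomaton.Run {A Q X : Type*} (Aut : TimedAutomaton A Q X) :
    TAConfig Q X → List (A × ℝ) → TAConfig Q X → Prop
  | nil (c : TAConfig Q X) : Aut.Run c [] c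
  | cons {c c' c'' : TAConfig Q X} {e : A × ℝ} {w : List (A × ℝ)} :
      Aut.Step c e c' → Aut.Run c' w c'' → Aut.Run c (e :: w) c''

/-- Language of a configuration: timed words admitting an accepting run from it. -/
def TimedAutomaton.LangFrom {A Q X : Type*} (Aut : TimedAutomaton A Q X)
    (c : TAConfig Q X) : Set (List (A × ℝ)) :=
  {w | ∃ c', Aut.Run c w c' ∧ c'.1 ∈ Aut.final}

/-- Language of a timed automaton: union over initial configurations. -/
def TimedAutomaton.Lang {A Q X : Type*} (Aut : TimedAutomaton A Q X) :
    Set (List (A × ℝ)) :=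
  {w | ∃ p ∈ Aut.init, w ∈ Aut.LangFrom (p, fun _ => 0, 0)}

/-- A configuration is reachable if some run from an initial configuration ends in it. -/
def TimedAutomaton.Reachable {A Q X : Type*} (Aut : TimedAutomaton A Q X)
    (c : TAConfig Q X) : Prop :=
  ∃ p ∈ Aut.init, ∃ w, Aut.Run (p, fun _ => 0, 0) w c

/-- Determinism: unique initial location, and two rules from the same location on the
same letter with jointly satisfiable guards agree on resets and target. -/
def TimedAutomaton.IsDeterministic {A Q X : Type*} (Aut : TimedAutomaton A Q X) : Prop :=
  (∃! p, p ∈ Aut.init) ∧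
  ∀ p a φ Y q φ' Y' q', (p, a, φ, Y, q) ∈ Aut.rules → (p, a, φ', Y', q') ∈ Aut.rules →
    (∃ ν : X → ℝ, ClockConstraint.sat ν φ ∧ ClockConstraint.sat ν φ') →
    Y = Y' ∧ q = q'

/-! A timed automorphism is strictly monotone and commutes with integer translations, so it
preserves every comparison `t - μ x ⋈ k` and `μ y - μ x ⋈ k` with an integer `k` made by a
guard. It therefore maps runs to runs, and since its inverse is again a timed automorphism,
the image of the language from `c` is exactly the language from the image of `c`. -/

-- The paper's `π(c)`.
def TAConfig.map {Q X : Type*} (π : ℝ → ℝ) (c : TAConfig Q X) : TAConfig Q X :=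
  (c.1, π ∘ c.2.1, π c.2.2)

lemma TAConfig.map_leftInverse {Q X : Type*} {σ π : ℝ → ℝ} (h : Function.LeftInverse σ π) :
    Function.LeftInverse (TAConfig.map σ) (TAConfig.map π : TAConfig Q X → _) := by
  rintro ⟨q, μ, now⟩
  simp only [TAConfig.map, h now, Function.comp_def, h _]

lemma mapTW_leftInverse {A : Type*} {σ π : ℝ → ℝ} (h : Function.LeftInverse σ π) :
    Function.LeftInverse (mapTW σ) (mapTW π : List (A × ℝ) → List (A × ℝ)) := by
  intro w
  simp [mapTW, List.map_map, Function.comp_def, h _]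

lemma CmpOp.holds_sub_iff (c : CmpOp) (a b d : ℝ) :
    c.holds (a - b) d ↔ c.holds a (b + d) := by
  cases c <;> simp only [CmpOp.holds] <;> constructor <;> intro h <;> linarith

lemma CmpOp.holds_iff_of_strictMono {f : ℝ → ℝ} (hf : StrictMono f) (c : CmpOp) (a b : ℝ) :
    c.holds (f a) (f b) ↔ c.holds a b := by
  cases c
  · exact hf.lt_iff_lt
  · exact hf.le_iff_le
  · exact hf.injective.eq_iff
  · exact hf.le_iff_le
  · exact hf.lt_iff_lt

namespace IsTimedAutomorphism

variable {π : ℝ → ℝ}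

noncomputable def inv (hπ : IsTimedAutomorphism π) : ℝ → ℝ :=
  (Equiv.ofBijective π hπ.1).symm

lemma inv_apply_apply (hπ : IsTimedAutomorphism π) : Function.LeftInverse hπ.inv π :=
  (Equiv.ofBijective π hπ.1).symm_apply_apply

lemma apply_inv_apply (hπ : IsTimedAutomorphism π) : Function.LeftInverse π hπ.inv :=
  (Equiv.ofBijective π hπ.1).apply_symm_apply

lemma isTimedAutomorphism_inv (hπ : IsTimedAutomorphism π) : IsTimedAutomorphism hπ.inv := by
  refine ⟨(Equiv.ofBijective π hπ.1).symm.bijective, fun a b hab => ?_, fun x => ?_⟩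
  · rwa [← hπ.2.1.lt_iff_lt, hπ.apply_inv_apply, hπ.apply_inv_apply]
  · apply hπ.1.1
    rw [hπ.apply_inv_apply, hπ.2.2, hπ.apply_inv_apply]

-- A timed automorphism is a degree one circle lift.
lemma map_add_intCast (hπ : IsTimedAutomorphism π) (x : ℝ) (k : ℤ) : π (x + k) = π x + k :=
  (⟨⟨π, hπ.2.1.monotone⟩, hπ.2.2⟩ : CircleDeg1Lift).map_add_int x k

lemma holds_sub_intCast_iff (hπ : IsTimedAutomorphism π) (c : CmpOp) (a b : ℝ) (k : ℤ) :
    c.holds (π a - π b) k ↔ c.holds (a - b) k := by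
  rw [CmpOp.holds_sub_iff, CmpOp.holds_sub_iff, ← hπ.map_add_intCast,
    CmpOp.holds_iff_of_strictMono hπ.2.1]

lemma sat_iff {X : Type*} (hπ : IsTimedAutomorphism π) (t : ℝ) (μ : X → ℝ)
    (φ : ClockConstraint X) :
    φ.sat (fun x => π t - π (μ x)) ↔ φ.sat (fun x => t - μ x) := by
  induction φ with
  | tt | ff => rfl
  | diff x y c k =>
    simp only [ClockConstraint.sat, sub_sub_sub_cancel_left]
    exact hπ.holds_sub_intCast_iff c _ _ k
  | single x c k => exact hπ.holds_sub_intCast_iff c t (μ x) k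
  | not φ ih => exact not_congr ih
  | and φ ψ ihφ ihψ => exact and_congr ihφ ihψ
  | or φ ψ ihφ ihψ => exact or_congr ihφ ihψ

end IsTimedAutomorphism

namespace TimedAutomaton

variable {A Q X : Type*} {Aut : TimedAutomaton A Q X} {π : ℝ → ℝ}

lemma Step.map (hπ : IsTimedAutomorphism π) {c c' : TAConfig Q X} {e : A × ℝ}
    (h : Aut.Step c e c') : Aut.Step (c.map π) (e.1, π e.2) (c'.map π) := by
  obtain ⟨hnow, hle, φ, Y, hrule, hsat, hreset, hkeep⟩ := h
  refine ⟨congrArg π hnow, hπ.2.1.monotone hle, φ, Y, hrule, (hπ.sat_iff e.2 c.2.1 φ).2 hsat,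
    fun x hx => congrArg π (hreset x hx), fun x hx => congrArg π (hkeep x hx)⟩

lemma Run.map (hπ : IsTimedAutomorphism π) {c c' : TAConfig Q X} {w : List (A × ℝ)}
    (h : Aut.Run c w c') : Aut.Run (c.map π) (mapTW π w) (c'.map π) := by
  induction h with
  | nil c => exact .nil _
  | cons hstep _ ih => exact .cons (hstep.map hπ) ih

lemma image_mapTW_langFrom_subset (hπ : IsTimedAutomorphism π) (c : TAConfig Q X) :
    mapTW π '' Aut.LangFrom c ⊆ Aut.LangFrom (c.map π) := by
  rintro _ ⟨w, ⟨c', hrun, hfinal⟩, rfl⟩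
  exact ⟨c'.map π, hrun.map hπ, hfinal⟩

lemma langFrom_map (hπ : IsTimedAutomorphism π) (c : TAConfig Q X) :
    Aut.LangFrom (c.map π) = mapTW π '' Aut.LangFrom c := by
  refine subset_antisymm (fun w hw => ?_) (image_mapTW_langFrom_subset hπ c)
  have hinv := image_mapTW_langFrom_subset hπ.isTimedAutomorphism_inv (c.map π) ⟨w, hw, rfl⟩
  rw [TAConfig.map_leftInverse hπ.inv_apply_apply] at hinv
  exact ⟨mapTW hπ.inv w, hinv, mapTW_leftInverse hπ.apply_inv_apply w⟩

end TimedAutomaton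

theorem lang_invariant_under_timed_automorphism_general
    {A Q X : Type*} (Aut : TimedAutomaton A Q X)
    (π : ℝ → ℝ) (hπ : IsTimedAutomorphism π)
    (p : Q) (μ : X → ℝ) (now : ℝ) :
    Aut.LangFrom (p, π ∘ μ, π now) = mapTW π '' Aut.LangFrom (p, μ, now) :=
  TimedAutomaton.langFrom_map hπ (p, μ, now)

/-- Invariance of the language semantics: for a timed automorphism `π` mapping the
configuration `(p, μ, now)` to a configuration with nonnegative components,
`L(A, π(c)) = π(L(A, c))`. -/
theorem lang_invariant_under_timed_automorphism
    {A Q X : Type*} (Aut : TimedAutomaton A Q X)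
    (π : ℝ → ℝ) (hπ : IsTimedAutomorphism π)
    (p : Q) (μ : X → ℝ) (now : ℝ)
    (hconf : ∀ x, 0 ≤ μ x ∧ μ x ≤ now)
    (hπμ : ∀ x, 0 ≤ π (μ x)) (hπnow : 0 ≤ π now) :
    Aut.LangFrom (p, π ∘ μ, π now) = mapTW π '' Aut.LangFrom (p, μ, now) :=
  lang_invariant_under_timed_automorphism_general Aut π hπ p μ now
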